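/- Let G be a groupoid with 2-cocycle ω satisfying ω(x, x⁻¹) = 1 for all x, let A ⊆ Iso(G) be an ω-regular bisection, and let f: Ω_A → 𝕋 be the well-defined function f(gag⁻¹) = ω(g, a)·ω(ga, g⁻¹) for a ∈ A, g ∈ G with s(g) = t(a). Then f satisfies the centrality identity f(gxg⁻¹) = ω(g, x)·ω(gx, g⁻¹)·f(x) for all x ∈ Ω_A and all g ∈ G with s(g) = s(x). -/
import Mathlib


open MeasureTheory ENNReal

structure DiscreteBorelGroupoid (G : Type*) [MeasurableSpace G] where
  s : G → G
  t : G → G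
  mul : G → G → G
  inv : G → G
  s_s : ∀ g, s (s g) = s g
  t_s : ∀ g, t (s g) = s g
  s_t : ∀ g, s (t g) = t g
  t_t : ∀ g, t (t g) = t g
  mul_s_self : ∀ g, mul g (s g) = g
  t_mul_self : ∀ g, mul (t g) g = g
  s_mul : ∀ {g h}, s g = t h → s (mul g h) = s h
  t_mul : ∀ {g h}, s g = t h → t (mul g h) = t g
  mul_assoc : ∀ {g h k}, s g = t h → s h = t k → mul (mul g h) k = mul g (mul h k)
  s_inv : ∀ g, s (inv g) = t g
  t_inv : ∀ g, t (inv g) = s g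
  mul_inv_self : ∀ g, mul g (inv g) = t g
  inv_mul_self : ∀ g, mul (inv g) g = s g
  measurable_s : Measurable s
  measurable_t : Measurable t
  measurable_inv : Measurable inv
  measurable_mul : Measurable (Function.uncurry mul)
  countable_s_fibers : ∀ x, {g | s g = x}.Countable
  countable_t_fibers : ∀ x, {g | t g = x}.Countable

namespace DiscreteBorelGroupoid

variable {G : Type*} [MeasurableSpace G] (Γ : DiscreteBorelGroupoid G)

def units : Set G := Set.range Γ.s

def IsBisection (A : Set G) : Prop := Set.InjOn Γ.s A ∧ Set.InjOn Γ.t A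

def smul (A B : Set G) : Set G :=
  {x | ∃ g ∈ A, ∃ h ∈ B, Γ.s g = Γ.t h ∧ x = Γ.mul g h}

def sinv (A : Set G) : Set G := Γ.inv '' A

def iso : Set G := {g | Γ.s g = Γ.t g}

def conj (g h : G) : G := Γ.mul (Γ.mul g h) (Γ.inv g)

def conjClass (A : Set G) : Set G :=
  {x | ∃ g, ∃ a ∈ A, Γ.s g = Γ.t a ∧ x = Γ.conj g a}

noncomputable def muS (μ : Measure G) (E : Set G) : ℝ≥0∞ :=
  ∫⁻ x, ((E ∩ {g | Γ.s g = x}).encard : ℝ≥0∞) ∂μ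

noncomputable def muT (μ : Measure G) (E : Set G) : ℝ≥0∞ :=
  ∫⁻ x, ((E ∩ {g | Γ.t g = x}).encard : ℝ≥0∞) ∂μ

def IsMeasuredGroupoid (μ : Measure G) : Prop :=
  IsProbabilityMeasure μ ∧ μ Γ.unitsᶜ = 0 ∧
    ∀ E : Set G, MeasurableSet E → (Γ.muS μ E = 0 ↔ Γ.muT μ E = 0)

def IsErgodic (μ : Measure G) : Prop :=
  ∀ E : Set G, MeasurableSet E → E ⊆ Γ.units →
    (∀ g, Γ.s g ∈ E ↔ Γ.t g ∈ E) → μ E = 0 ∨ μ E = 1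

def IsIcc (μ : Measure G) : Prop :=
  ∀ A : Set G, A ⊆ Γ.iso → MeasurableSet A → Γ.muS μ A ≠ 0 →
    Γ.muS μ (Γ.conjClass A) < ⊤ → Γ.muS μ (A \ Γ.units) = 0

end DiscreteBorelGroupoid

namespace DiscreteBorelGroupoid
variable {G : Type*} [MeasurableSpace G]

/-- A `Circle`-valued 2-cocycle on a groupoid. -/
def IsCocycle (Γ : DiscreteBorelGroupoid G) (ω : G → G → Circle) : Prop :=
  ∀ x y z, Γ.s x = Γ.t y → Γ.s y = Γ.t z →
    ω x (Γ.mul y z) * ω y z = ω (Γ.mul x y) z * ω x y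

/-- An `ω`-regular bisection contained in the isotropy subgroupoid. -/
def IsOmegaRegular (Γ : DiscreteBorelGroupoid G) (ω : G → G → Circle)
    (A : Set G) : Prop :=
  ∀ g x y, x ∈ A → y ∈ A → Γ.s g = Γ.t x → Γ.conj g x = y → ω y g = ω g x

end DiscreteBorelGroupoid



namespace DiscreteBorelGroupoid
variable {G : Type*} [MeasurableSpace G]

lemma inv_s' (Γ : DiscreteBorelGroupoid G) (g : G) : Γ.inv (Γ.s g) = Γ.s g := by
  have h1 : Γ.t (Γ.inv (Γ.s g)) = Γ.s g := by rw [Γ.t_inv, Γ.s_s]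
  calc Γ.inv (Γ.s g) = Γ.mul (Γ.t (Γ.inv (Γ.s g))) (Γ.inv (Γ.s g)) := (Γ.t_mul_self _).symm
    _ = Γ.mul (Γ.s g) (Γ.inv (Γ.s g)) := by rw [h1]
    _ = Γ.t (Γ.s g) := Γ.mul_inv_self _
    _ = Γ.s g := Γ.t_s g

lemma eq_inv' (Γ : DiscreteBorelGroupoid G) {x y : G} (h1 : Γ.s x = Γ.t y)
    (h2 : Γ.mul x y = Γ.t x) : y = Γ.inv x := by
  calc y = Γ.mul (Γ.t y) y := (Γ.t_mul_self y).symm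
    _ = Γ.mul (Γ.mul (Γ.inv x) x) y := by rw [Γ.inv_mul_self, h1]
    _ = Γ.mul (Γ.inv x) (Γ.mul x y) := Γ.mul_assoc (by rw [Γ.s_inv]) h1
    _ = Γ.mul (Γ.inv x) (Γ.s (Γ.inv x)) := by rw [h2, Γ.s_inv]
    _ = Γ.inv x := Γ.mul_s_self _

lemma inv_mul' (Γ : DiscreteBorelGroupoid G) {g h : G} (hc : Γ.s g = Γ.t h) :
    Γ.inv (Γ.mul g h) = Γ.mul (Γ.inv h) (Γ.inv g) := by
  refine (Γ.eq_inv' ?_ ?_).symm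
  · rw [Γ.s_mul hc, Γ.t_mul (by rw [Γ.s_inv, ← hc, Γ.t_inv]), Γ.t_inv]
  · have e1 : Γ.mul (Γ.mul g h) (Γ.mul (Γ.inv h) (Γ.inv g))
        = Γ.mul g (Γ.mul h (Γ.mul (Γ.inv h) (Γ.inv g))) := by
      rw [Γ.mul_assoc hc (by rw [Γ.t_mul (by rw [Γ.s_inv, ← hc, Γ.t_inv]), Γ.t_inv])]
    have e2 : Γ.mul h (Γ.mul (Γ.inv h) (Γ.inv g))
        = Γ.mul (Γ.mul h (Γ.inv h)) (Γ.inv g) := by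
      rw [Γ.mul_assoc (by rw [Γ.t_inv]) (by rw [Γ.s_inv, ← hc, Γ.t_inv])]
    rw [e1, e2, Γ.mul_inv_self, ← hc, show Γ.s g = Γ.t (Γ.inv g) from (Γ.t_inv g).symm,
      Γ.t_mul_self, Γ.mul_inv_self, Γ.t_mul hc]

lemma s_conj' (Γ : DiscreteBorelGroupoid G) {g a : G} (h : Γ.s g = Γ.t a)
    (haiso : Γ.s a = Γ.t a) : Γ.s (Γ.conj g a) = Γ.t g := by
  unfold conj
  rw [Γ.s_mul (by rw [Γ.s_mul h, Γ.t_inv, haiso, ← h]), Γ.s_inv]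

lemma t_conj' (Γ : DiscreteBorelGroupoid G) {g a : G} (h : Γ.s g = Γ.t a)
    (haiso : Γ.s a = Γ.t a) : Γ.t (Γ.conj g a) = Γ.t g := by
  unfold conj
  rw [Γ.t_mul (by rw [Γ.s_mul h, Γ.t_inv, haiso, ← h]), Γ.t_mul h]

lemma conj_mul' (Γ : DiscreteBorelGroupoid G) {g a : G} (h : Γ.s g = Γ.t a)
    (haiso : Γ.s a = Γ.t a) : Γ.mul (Γ.conj g a) g = Γ.mul g a := by
  unfold conj
  have h1 : Γ.s (Γ.mul g a) = Γ.t (Γ.inv g) := by rw [Γ.s_mul h, Γ.t_inv, haiso, ← h]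
  rw [Γ.mul_assoc h1 (by rw [Γ.s_inv]), Γ.inv_mul_self,
    show Γ.s g = Γ.s (Γ.mul g a) from by rw [Γ.s_mul h, haiso, ← h], Γ.mul_s_self]

lemma conj_conj' (Γ : DiscreteBorelGroupoid G) {g h a : G} (hgh : Γ.s g = Γ.t h)
    (hha : Γ.s h = Γ.t a) (haiso : Γ.s a = Γ.t a) :
    Γ.conj g (Γ.conj h a) = Γ.conj (Γ.mul g h) a := by
  have hsha : Γ.s (Γ.mul h a) = Γ.s a := Γ.s_mul hha
  have htha : Γ.t (Γ.mul h a) = Γ.t h := Γ.t_mul hha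
  have h1 : Γ.s (Γ.mul h a) = Γ.t (Γ.inv h) := by rw [hsha, Γ.t_inv, haiso, ← hha]
  unfold conj
  rw [Γ.inv_mul' hgh]
  have e1 : Γ.mul (Γ.mul (Γ.mul g h) a) (Γ.mul (Γ.inv h) (Γ.inv g))
      = Γ.mul (Γ.mul g (Γ.mul h a)) (Γ.mul (Γ.inv h) (Γ.inv g)) := by
    rw [Γ.mul_assoc hgh hha]
  have hinvhg : Γ.s (Γ.inv h) = Γ.t (Γ.inv g) := by rw [Γ.s_inv, Γ.t_inv, hgh]
  have h2 : Γ.s (Γ.mul g (Γ.mul h a)) = Γ.t (Γ.inv h) := by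
    rw [Γ.s_mul (by rw [htha]; exact hgh), hsha, Γ.t_inv, haiso, ← hha]
  have e2 : Γ.mul (Γ.mul g (Γ.mul h a)) (Γ.mul (Γ.inv h) (Γ.inv g))
      = Γ.mul (Γ.mul (Γ.mul g (Γ.mul h a)) (Γ.inv h)) (Γ.inv g) := by
    rw [Γ.mul_assoc h2 hinvhg]
  have h3 : Γ.s g = Γ.t (Γ.mul h a) := by rw [htha]; exact hgh
  have e3 : Γ.mul (Γ.mul g (Γ.mul h a)) (Γ.inv h)
      = Γ.mul g (Γ.mul (Γ.mul h a) (Γ.inv h)) := by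
    rw [Γ.mul_assoc h3 h1]
  rw [e1, e2, e3]

section
variable (Γ : DiscreteBorelGroupoid G) {ω : G → G → Circle}

lemma omega_s' (hω : Γ.IsCocycle ω) (hinv : ∀ x, ω x (Γ.inv x) = 1) (g : G) :
    ω g (Γ.s g) = 1 := by
  have c := hω g (Γ.s g) (Γ.s g) (Γ.t_s g).symm (by rw [Γ.s_s, Γ.t_s])
  have hu : Γ.mul (Γ.s g) (Γ.s g) = Γ.s g := by
    conv_lhs => rw [show Γ.mul (Γ.s g) (Γ.s g) = Γ.mul (Γ.s g) (Γ.s (Γ.s g)) by rw [Γ.s_s]]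
    exact Γ.mul_s_self _
  have huu : ω (Γ.s g) (Γ.s g) = 1 := by
    have := hinv (Γ.s g); rwa [Γ.inv_s'] at this
  rw [hu, Γ.mul_s_self, huu, mul_one] at c
  exact (mul_left_cancel (a := ω g (Γ.s g)) (b := (1 : Circle)) (by rw [mul_one]; exact c)).symm

lemma omega_t' (hω : Γ.IsCocycle ω) (hinv : ∀ x, ω x (Γ.inv x) = 1) (g : G) :
    ω (Γ.t g) g = 1 := by
  have c := hω (Γ.t g) (Γ.t g) g (by rw [Γ.s_t, Γ.t_t]) (Γ.s_t g)
  have hu : Γ.mul (Γ.t g) (Γ.t g) = Γ.t g := by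
    conv_lhs => rw [show Γ.mul (Γ.t g) (Γ.t g) = Γ.mul (Γ.t g) (Γ.s (Γ.t g)) by rw [Γ.s_t]]
    exact Γ.mul_s_self _
  have huu : ω (Γ.t g) (Γ.t g) = 1 := by
    have h2 : Γ.inv (Γ.t g) = Γ.t g := by
      have := Γ.inv_s' (Γ.t g); rwa [Γ.s_t] at this
    have := hinv (Γ.t g); rwa [h2] at this
  rw [Γ.t_mul_self, hu, huu, mul_one] at c
  exact mul_left_cancel (a := ω (Γ.t g) g) (by rw [mul_one]; exact c)

lemma omega_inv_self' (hω : Γ.IsCocycle ω) (hinv : ∀ x, ω x (Γ.inv x) = 1) (g : G) :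
    ω (Γ.inv g) g = 1 := by
  have c := hω g (Γ.inv g) g (Γ.t_inv g).symm (Γ.s_inv g)
  rw [Γ.inv_mul_self, Γ.mul_inv_self, Γ.omega_s' hω hinv, Γ.omega_t' hω hinv, hinv,
    one_mul, mul_one] at c
  exact c

lemma omega_mul_inv' (hω : Γ.IsCocycle ω) (hinv : ∀ x, ω x (Γ.inv x) = 1)
    {p q : G} (h : Γ.s p = Γ.t q) :
    ω p q * ω (Γ.mul p q) (Γ.inv q) = 1 := by
  have c := hω (Γ.mul p q) (Γ.inv q) q (by rw [Γ.s_mul h, Γ.t_inv]) (Γ.s_inv q)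
  have h3 : Γ.mul (Γ.mul p q) (Γ.inv q) = p := by
    rw [Γ.mul_assoc h (Γ.t_inv q).symm, Γ.mul_inv_self, ← h, Γ.mul_s_self]
  rw [Γ.inv_mul_self, ← Γ.s_mul h, Γ.omega_s' hω hinv,
    Γ.omega_inv_self' hω hinv, h3, one_mul] at c
  exact c.symm

lemma omega_conj' (hω : Γ.IsCocycle ω) (hinv : ∀ x, ω x (Γ.inv x) = 1)
    {g a : G} (h : Γ.s g = Γ.t a) (haiso : Γ.s a = Γ.t a) :
    ω (Γ.mul g a) (Γ.inv g) = (ω (Γ.conj g a) g)⁻¹ := by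
  have c := Γ.omega_mul_inv' hω hinv (p := Γ.conj g a) (q := g) (Γ.s_conj' h haiso)
  rw [Γ.conj_mul' h haiso] at c
  exact eq_inv_of_mul_eq_one_right c

end
end DiscreteBorelGroupoid

open DiscreteBorelGroupoid in
theorem stmt_11 {G : Type*} [MeasurableSpace G] (Γ : DiscreteBorelGroupoid G)
    (ω : G → G → Circle) (hω : Γ.IsCocycle ω)
    (hinv : ∀ x, ω x (Γ.inv x) = 1)
    (A : Set G) (hAiso : A ⊆ Γ.iso) (hAbis : Γ.IsBisection A)
    (hreg : Γ.IsOmegaRegular ω A)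
    (f : G → Circle)
    (hf : ∀ g a, a ∈ A → Γ.s g = Γ.t a →
      f (Γ.conj g a) = ω g a * ω (Γ.mul g a) (Γ.inv g)) :
    ∀ x ∈ Γ.conjClass A, ∀ g, Γ.s g = Γ.s x →
      f (Γ.conj g x) = ω g x * ω (Γ.mul g x) (Γ.inv g) * f x := by
  intro x hx g hsg
  obtain ⟨h, a, ha, hha, rfl⟩ := hx
  have haiso : Γ.s a = Γ.t a := hAiso ha
  set x := Γ.conj h a with hxdef
  have hsx : Γ.s x = Γ.t h := Γ.s_conj' hha haiso
  have htx : Γ.t x = Γ.t h := Γ.t_conj' hha haiso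
  have hg : Γ.s g = Γ.t h := by rw [hsg, hsx]
  have hgx : Γ.s g = Γ.t x := by rw [hg, htx]
  have hxiso : Γ.s x = Γ.t x := by rw [hsx, htx]
  have hgha : Γ.s (Γ.mul g h) = Γ.t a := by rw [Γ.s_mul hg, hha]
  have hcc : Γ.conj g x = Γ.conj (Γ.mul g h) a := Γ.conj_conj' hg hha haiso
  set y := Γ.conj (Γ.mul g h) a with hydef
  rw [hcc, hf (Γ.mul g h) a ha hgha, hf h a ha hha]
  rw [Γ.omega_conj' hω hinv hgha haiso, Γ.omega_conj' hω hinv hha haiso,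
    Γ.omega_conj' hω hinv hgx hxiso, hcc]
  -- cocycle identities
  have C1 := hω g h a hg hha
  have hsy : Γ.s y = Γ.t g := by
    rw [hydef, Γ.s_conj' hgha haiso, Γ.t_mul hg]
  have hmyg : Γ.mul y g = Γ.mul g x := by
    rw [← hcc, Γ.conj_mul' hgx hxiso]
  have C2 := hω y g h hsy hg
  rw [hmyg] at C2
  have hsxh : Γ.s x = Γ.t h := hsx
  have hmxh : Γ.mul x h = Γ.mul h a := Γ.conj_mul' hha haiso
  have C3 := hω g x h hgx hsxh
  rw [hmxh] at C3
  -- pass to ℂ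
  apply Subtype.coe_injective
  have c1 := congrArg (Subtype.val : Circle → ℂ) C1
  have c2 := congrArg (Subtype.val : Circle → ℂ) C2
  have c3 := congrArg (Subtype.val : Circle → ℂ) C3
  push_cast at c1 c2 c3 ⊢
  have hY : (ω y (Γ.mul g h) : ℂ) ≠ 0 := Circle.coe_ne_zero _
  have hZ : (ω y g : ℂ) ≠ 0 := Circle.coe_ne_zero _
  have hW : (ω x h : ℂ) ≠ 0 := Circle.coe_ne_zero _
  have hγ : (ω g h : ℂ) ≠ 0 := Circle.coe_ne_zero _
  have key : (ω (Γ.mul g h) a : ℂ) * (ω y g) * (ω x h)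
      = (ω g x) * (ω y (Γ.mul g h)) * (ω h a) := by
    apply mul_right_cancel₀ hγ
    linear_combination (-((ω y g : ℂ) * (ω x h))) * c1 - ((ω g x : ℂ) * (ω h a)) * c2
      + ((ω h a : ℂ) * (ω y g)) * c3
  field_simp
  linear_combination key
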